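/- Let x, y be coprime nonzero integers, m ≥ 1, d ≥ 2, and suppose the polynomial f(z) = z^d + x^m/(x^m + y^m) has a preperiodic point in ℚ. Then x^m + y^m = ± w^d for some integer w. -/

import Mathlib

/-!
If `p` divides `N = x ^ m + y ^ m`, coprimality gives `p ∤ x`, so the constant
`c = x ^ m / N` has `v_p(c) = -v_p(N) < 0`. If moreover `d ∤ v_p(N)`, then `d • v_p(w) ≠ v_p(c)`
for every `w ≠ 0`, whence `v_p(w ^ d + c) = min (d • v_p(w)) (v_p(c))`: after one step the
valuation is negative, and from then on it strictly decreases, so no rational orbit is finite.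
Hence `d` divides every `v_p(N)`, i.e. `|N|` is a `d`-th power.
-/

theorem Nat.exists_eq_pow_of_dvd_factorization {d n : ℕ} (hd : d ≠ 0)
    (h : ∀ p, d ∣ n.factorization p) : ∃ w : ℕ, n = w ^ d := by
  rcases eq_or_ne n 0 with rfl | hn
  · exact ⟨0, (zero_pow hd).symm⟩
  refine ⟨d.floorRoot n, Nat.eq_of_factorization_eq hn (pow_ne_zero _ <|
    Nat.floorRoot_ne_zero.2 ⟨hd, hn⟩) fun p => ?_⟩
  rw [Nat.factorization_pow, Finsupp.smul_apply, Nat.factorization_floorRoot,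
    Finsupp.floorDiv_apply, Nat.floorDiv_eq_div, smul_eq_mul, Nat.mul_div_cancel' (h p)]

theorem Int.exists_eq_pow_or_eq_neg_pow_of_dvd_padicValInt {d : ℕ} {n : ℤ} (hd : d ≠ 0)
    (h : ∀ p : ℕ, p.Prime → d ∣ padicValInt p n) : ∃ w : ℤ, n = w ^ d ∨ n = -(w ^ d) := by
  obtain ⟨w, hw⟩ := Nat.exists_eq_pow_of_dvd_factorization (n := n.natAbs) hd fun p => by
    by_cases hp : p.Prime
    · rw [Nat.factorization_def _ hp]; exact h p hp
    · simp [Nat.factorization_eq_zero_of_not_prime _ hp]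
  refine ⟨w, ?_⟩
  rcases Int.natAbs_eq n with h | h <;> rw [h, hw] <;> push_cast <;> simp

theorem padicValRat_intCast_div_of_not_dvd {p : ℕ} [Fact p.Prime] {a b : ℤ}
    (ha : ¬ (p : ℤ) ∣ a) (hb : b ≠ 0) : padicValRat p ((a : ℚ) / b) = -padicValInt p b := by
  have ha0 : (a : ℚ) ≠ 0 := Int.cast_ne_zero.2 fun h => ha (h ▸ dvd_zero _)
  rw [padicValRat.div ha0 (Int.cast_ne_zero.2 hb), padicValRat.of_int, padicValRat.of_int,
    padicValInt.eq_zero_of_not_dvd ha, Nat.cast_zero, zero_sub]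

section PowAdd

variable {p : ℕ} [Fact p.Prime] {d : ℕ} {c : ℚ}

theorem padicValRat_pow_add_of_not_dvd (hc : ¬ (d : ℤ) ∣ padicValRat p c) {w : ℚ} (hw : w ≠ 0) :
    w ^ d + c ≠ 0 ∧ padicValRat p (w ^ d + c) = min (d * padicValRat p w) (padicValRat p c) := by
  have hc0 : c ≠ 0 := by rintro rfl; simp at hc
  have hne : padicValRat p (w ^ d) ≠ padicValRat p c := by
    rw [padicValRat.pow w]; rintro h; exact hc ⟨_, h.symm⟩
  have hsum : w ^ d + c ≠ 0 := by
    intro h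
    rw [eq_neg_of_add_eq_zero_left h, padicValRat.neg] at hne
    exact hne rfl
  refine ⟨hsum, ?_⟩
  rw [padicValRat.add_eq_min hsum (pow_ne_zero _ hw) hc0 hne, padicValRat.pow w]

theorem infinite_orbit_pow_add_of_padicValRat_neg (hd : 2 ≤ d) (hneg : padicValRat p c < 0)
    (hnd : ¬ (d : ℤ) ∣ padicValRat p c) (z : ℚ) :
    (Set.range fun n => (fun u : ℚ => u ^ d + c)^[n] z).Infinite := by
  set f : ℚ → ℚ := fun u => u ^ d + c
  have hc0 : c ≠ 0 := by rintro rfl; simp at hneg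
  have hmaps : ∀ w, f w ≠ 0 ∧ padicValRat p (f w) < 0 := by
    intro w
    rcases eq_or_ne w 0 with rfl | hw
    · simpa [f, zero_pow (by omega : d ≠ 0)] using ⟨hc0, hneg⟩
    · obtain ⟨hne, hval⟩ := padicValRat_pow_add_of_not_dvd hnd hw
      exact ⟨hne, hval ▸ min_lt_of_right_lt hneg⟩
  have hdecr : ∀ w, w ≠ 0 → padicValRat p w < 0 → padicValRat p (f w) < padicValRat p w := by
    intro w hw hv
    rw [(padicValRat_pow_add_of_not_dvd hnd hw).2]
    refine min_lt_of_left_lt ?_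
    have : (2 : ℤ) ≤ d := by exact_mod_cast hd
    nlinarith
  have hanti : StrictAnti fun n => padicValRat p (f^[n + 1] z) := by
    refine strictAnti_nat_of_succ_lt fun n => ?_
    rw [Function.iterate_succ_apply' f (n + 1)]
    obtain ⟨hne, hv⟩ := hmaps (f^[n] z)
    rw [← Function.iterate_succ_apply' f n] at hne hv
    exact hdecr _ hne hv
  exact Set.infinite_of_injective_forall_mem (fun a b hab => hanti.injective (congrArg _ hab))
    fun n => ⟨n + 1, rfl⟩

end PowAdd

theorem power_sum_of_preperiodic_general
    (x y : ℤ) (hxy : IsCoprime x y)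
    (m d : ℕ) (hd : 2 ≤ d)
    (hpre : ∃ z : ℚ,
      ({w : ℚ | ∃ n : ℕ,
          (fun u : ℚ => u ^ d + (x : ℚ) ^ m / ((x : ℚ) ^ m + (y : ℚ) ^ m))^[n] z
            = w}).Finite) :
    ∃ w : ℤ, x ^ m + y ^ m = w ^ d ∨ x ^ m + y ^ m = -(w ^ d) := by
  obtain ⟨z, hz⟩ := hpre
  refine Int.exists_eq_pow_or_eq_neg_pow_of_dvd_padicValInt (by omega) fun p hp => ?_
  have : Fact p.Prime := ⟨hp⟩
  by_contra hnd
  have hv0 : padicValInt p (x ^ m + y ^ m) ≠ 0 := by rintro h; simp [h] at hnd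
  obtain ⟨-, hN, hpN⟩ : p ≠ 1 ∧ x ^ m + y ^ m ≠ 0 ∧ (p : ℤ) ∣ x ^ m + y ^ m := by
    simpa only [ne_eq, padicValInt.eq_zero_iff, not_or, not_not] using hv0
  have hcop : IsCoprime (x ^ m) (x ^ m + y ^ m) := by
    simpa [add_comm] using hxy.pow.add_mul_left_right 1
  have hpx : ¬ (p : ℤ) ∣ x ^ m := fun hpx =>
    (Nat.prime_iff_prime_int.1 hp).not_isUnit (hcop.isUnit_of_dvd' hpx hpN)
  have hv : padicValRat p ((x : ℚ) ^ m / ((x : ℚ) ^ m + (y : ℚ) ^ m)) =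
      -padicValInt p (x ^ m + y ^ m) := by
    exact_mod_cast padicValRat_intCast_div_of_not_dvd hpx hN
  refine infinite_orbit_pow_add_of_padicValRat_neg (p := p) hd ?_ ?_ z hz
  · rw [hv, Left.neg_neg_iff, Nat.cast_pos]
    exact Nat.pos_of_ne_zero hv0
  · rwa [hv, dvd_neg, Int.natCast_dvd_natCast]

/-- If `x, y` are coprime nonzero integers, `m ≥ 1`, `d ≥ 2`, and
`f(z) = z^d + x^m/(x^m + y^m)` has a preperiodic point in `ℚ`, then
`x^m + y^m = ±w^d` for some integer `w`. -/
theorem power_sum_of_preperiodic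
    (x y : ℤ) (hx : x ≠ 0) (hy : y ≠ 0) (hxy : IsCoprime x y)
    (m d : ℕ) (hm : 1 ≤ m) (hd : 2 ≤ d)
    (hpre : ∃ z : ℚ,
      ({w : ℚ | ∃ n : ℕ,
          (fun u : ℚ => u ^ d + (x : ℚ) ^ m / ((x : ℚ) ^ m + (y : ℚ) ^ m))^[n] z
            = w}).Finite) :
    ∃ w : ℤ, x ^ m + y ^ m = w ^ d ∨ x ^ m + y ^ m = -(w ^ d) :=
  power_sum_of_preperiodic_general x y hxy m d hd hpre
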